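/- arXiv:2304.00801 — 3 statements merged into one kernel-verified Lean document; each statement's English description precedes it below -/
import Mathlib

section
/- Let m : Ω → [0,1] be measurable with ‖m‖₁ > 0 and let D* = sup_{s∈S} D_m(s) be the optimal Dice value over binary segmentations. A function c ∈ M attains the infimum of the soft-Dice loss SD_m over M if and only if, λ-almost everywhere, c(ω) = 0 when m(ω) < D*/2 and c(ω) = 1 when m(ω) > D*/2 (c may take any value in [0,1] on the set where m(ω) = D*/2). -/
open MeasureTheory Filter

noncomputable section

/-- The unit cube `[0,1]^n`. -/
def cube (n : ℕ) : Set (Fin n → ℝ) := Set.univ.pi fun _ => Set.Icc (0:ℝ) 1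

/-- The (normalized) Lebesgue measure on the unit cube. -/
def lam (n : ℕ) : Measure (Fin n → ℝ) := volume.restrict (cube n)

/-- The `L¹`-volume `‖f‖₁ = ∫ f dλ` (for nonnegative `f`). -/
def vol1 (n : ℕ) (f : (Fin n → ℝ) → ℝ) : ℝ := ∫ ω, f ω ∂(lam n)

/-- The Dice score `D_m(s) = 2∫ s·m dλ / (‖s‖₁ + ‖m‖₁)`. -/
def Dice (n : ℕ) (m s : (Fin n → ℝ) → ℝ) : ℝ :=
  2 * (∫ ω, s ω * m ω ∂(lam n)) / (vol1 n s + vol1 n m)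

/-- The soft-Dice loss `SD_m(c) = 1 - 2∫ c·m dλ / (‖c‖₁ + ‖m‖₁)`. -/
def softDice (n : ℕ) (m c : (Fin n → ℝ) → ℝ) : ℝ :=
  1 - 2 * (∫ ω, c ω * m ω ∂(lam n)) / (vol1 n c + vol1 n m)

/-- Membership in `M`: measurable with values in `[0,1]`. -/
def MemM (n : ℕ) (m : (Fin n → ℝ) → ℝ) : Prop :=
  Measurable m ∧ ∀ ω, m ω ∈ Set.Icc (0:ℝ) 1

/-- Membership in `S`: measurable with values in `{0,1}`. -/
def MemS (n : ℕ) (s : (Fin n → ℝ) → ℝ) : Prop :=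
  Measurable s ∧ ∀ ω, s ω = 0 ∨ s ω = 1

/-- The set of soft-Dice values over `M`. -/
def SDvals (n : ℕ) (m : (Fin n → ℝ) → ℝ) : Set ℝ :=
  {x : ℝ | ∃ c, MemM n c ∧ x = softDice n m c}

/-- The set of Dice values over `S`. -/
def Dvals (n : ℕ) (m : (Fin n → ℝ) → ℝ) : Set ℝ :=
  {x : ℝ | ∃ s, MemS n s ∧ x = Dice n m s}

/-! For every threshold `θ` and every `c ∈ M`, `∫ c (2m - θ) ≤ ∫ (2m - θ)⁺`, with equality exactly
when `c = 1` a.e. on `{2m > θ}` and `c = 0` a.e. on `{2m < θ}`; the binary segmentation `{2m > θ}`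
attains the bound. Since `Dice c ≤ θ` iff `∫ c (2m - θ) ≤ θ ‖m‖₁`, the optimal Dice value `D*`
satisfies `∫ (2m - D*)⁺ = D* ‖m‖₁`: the segmentation `{2m > D*}` gives `≤`, and `≥` holds because
`θ ‖m‖₁ ≤ ∫ (2m - θ)⁺` at every Dice value `θ` of a segmentation, both sides are continuous in `θ`
and `D*` is a limit of such values. Hence `D*` also bounds the Dice value of every `c ∈ M`, it is
attained exactly by the `c` of the statement, and `SD_m = 1 - D_m`. -/

open Set

section Bathtub

variable {α : Type*} [MeasurableSpace α] {μ : Measure α} {c f : α → ℝ}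

lemma mul_le_max_zero {c a : ℝ} (hc : c ∈ Icc (0 : ℝ) 1) : c * a ≤ max a 0 := by
  rcases le_total a 0 with ha | ha
  · exact (mul_nonpos_of_nonneg_of_nonpos hc.1 ha).trans (le_max_right _ _)
  · exact (mul_le_of_le_one_left ha hc.2).trans (le_max_left _ _)

lemma mul_eq_max_zero_iff {c a : ℝ} :
    c * a = max a 0 ↔ (a < 0 → c = 0) ∧ (0 < a → c = 1) := by
  rcases lt_trichotomy a 0 with ha | rfl | ha
  · simp [max_eq_right ha.le, ha, ha.not_gt, ha.ne]
  · simp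
  · simp [max_eq_left ha.le, ha, ha.not_gt, ha.ne']

lemma integrable_mul_of_mem_Icc (hc : Measurable c) (hc01 : ∀ x, c x ∈ Icc (0 : ℝ) 1)
    (hf : Integrable f μ) : Integrable (fun x => c x * f x) μ :=
  hf.bdd_mul hc.aestronglyMeasurable (c := 1) <| ae_of_all _ fun x => by
    rw [Real.norm_eq_abs, abs_of_nonneg (hc01 x).1]
    exact (hc01 x).2

theorem integral_mul_le_integral_max_zero (hc : Measurable c)
    (hc01 : ∀ x, c x ∈ Icc (0 : ℝ) 1) (hf : Integrable f μ) :
    ∫ x, c x * f x ∂μ ≤ ∫ x, max (f x) 0 ∂μ :=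
  integral_mono (integrable_mul_of_mem_Icc hc hc01 hf) hf.pos_part fun x => mul_le_max_zero (hc01 x)

theorem integral_mul_eq_integral_max_zero_iff (hc : Measurable c)
    (hc01 : ∀ x, c x ∈ Icc (0 : ℝ) 1) (hf : Integrable f μ) :
    ∫ x, c x * f x ∂μ = ∫ x, max (f x) 0 ∂μ ↔
      ∀ᵐ x ∂μ, (f x < 0 → c x = 0) ∧ (0 < f x → c x = 1) := by
  rw [integral_eq_iff_of_ae_le (integrable_mul_of_mem_Icc hc hc01 hf) hf.pos_part
    (ae_of_all _ fun x => mul_le_max_zero (hc01 x))]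
  exact eventually_congr (ae_of_all _ fun x => mul_eq_max_zero_iff)

lemma lipschitzWith_one_integral_max_sub_zero [IsProbabilityMeasure μ] (hf : Integrable f μ) :
    LipschitzWith 1 fun θ => ∫ x, max (f x - θ) 0 ∂μ := by
  refine LipschitzWith.of_le_add fun θ η => ?_
  have hbound : ∀ x, max (f x - θ) 0 ≤ max (f x - η) 0 + dist θ η := fun x => by
    rw [Real.dist_eq]
    exact max_le (by linarith [le_max_left (f x - η) 0, neg_abs_le (θ - η)])
      (by positivity)
  have hint (θ : ℝ) : Integrable (fun x => max (f x - θ) 0) μ :=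
    (hf.sub (integrable_const θ)).pos_part
  calc ∫ x, max (f x - θ) 0 ∂μ ≤ ∫ x, (max (f x - η) 0 + dist θ η) ∂μ :=
        integral_mono (hint θ) ((hint η).add (integrable_const _)) hbound
    _ = ∫ x, max (f x - η) 0 ∂μ + dist θ η := by
        rw [integral_add (hint η) (integrable_const _), integral_const, probReal_univ, one_smul]

end Bathtub

instance (n : ℕ) : IsProbabilityMeasure (lam n) := ⟨by
  rw [lam, Measure.restrict_apply_univ, cube, volume_pi_pi]
  simp [Real.volume_Icc]⟩

section Dice

variable {n : ℕ} {m c s : (Fin n → ℝ) → ℝ}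

lemma MemS.memM (hs : MemS n s) : MemM n s :=
  ⟨hs.1, fun x => by rcases hs.2 x with h | h <;> simp [h]⟩

lemma MemM.integrable (hc : MemM n c) : Integrable c (lam n) :=
  Integrable.of_bound hc.1.aestronglyMeasurable 1 <| ae_of_all _ fun x => by
    rw [Real.norm_eq_abs, abs_of_nonneg (hc.2 x).1]
    exact (hc.2 x).2

lemma MemM.vol1_nonneg (hc : MemM n c) : 0 ≤ vol1 n c :=
  integral_nonneg fun x => (hc.2 x).1

lemma MemM.integrable_two_mul_sub (hm : MemM n m) (θ : ℝ) :
    Integrable (fun x => 2 * m x - θ) (lam n) :=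
  (hm.integrable.const_mul 2).sub (integrable_const θ)

lemma softDice_eq_one_sub_Dice : softDice n m c = 1 - Dice n m c := rfl

lemma integral_mul_two_mul_sub (hm : MemM n m) (hc : MemM n c) (θ : ℝ) :
    ∫ x, c x * (2 * m x - θ) ∂lam n = 2 * ∫ x, c x * m x ∂lam n - θ * vol1 n c := by
  simp only [mul_sub, mul_left_comm (c _) 2, mul_comm (c _) θ]
  rw [integral_sub ((integrable_mul_of_mem_Icc hc.1 hc.2 hm.integrable).const_mul 2)
    (hc.integrable.const_mul θ), integral_const_mul, integral_const_mul, vol1]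

lemma Dice_le_iff (hm : MemM n m) (hpos : 0 < vol1 n m) (hc : MemM n c) (θ : ℝ) :
    Dice n m c ≤ θ ↔ ∫ x, c x * (2 * m x - θ) ∂lam n ≤ θ * vol1 n m := by
  rw [Dice, div_le_iff₀ (by linarith [hc.vol1_nonneg]), integral_mul_two_mul_sub hm hc]
  constructor <;> intro h <;> linarith

lemma Dice_eq_iff (hm : MemM n m) (hpos : 0 < vol1 n m) (hc : MemM n c) (θ : ℝ) :
    Dice n m c = θ ↔ ∫ x, c x * (2 * m x - θ) ∂lam n = θ * vol1 n m := by
  rw [Dice, div_eq_iff (by linarith [hc.vol1_nonneg]), integral_mul_two_mul_sub hm hc]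
  constructor <;> intro h <;> linarith

lemma Dice_le_one (hm : MemM n m) (hpos : 0 < vol1 n m) (hc : MemM n c) : Dice n m c ≤ 1 := by
  rw [Dice_le_iff hm hpos hc, one_mul, vol1]
  refine integral_mono (integrable_mul_of_mem_Icc hc.1 hc.2 (hm.integrable_two_mul_sub 1))
    hm.integrable fun x => ?_
  nlinarith [mul_nonneg (hc.2 x).1 (sub_nonneg.2 (hm.2 x).2),
    mul_nonneg (hm.2 x).1 (sub_nonneg.2 (hc.2 x).2)]

lemma zero_mem_Dvals : (0 : ℝ) ∈ Dvals n m :=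
  ⟨fun _ => 0, ⟨measurable_const, fun _ => Or.inl rfl⟩, by simp [Dice]⟩

lemma bddAbove_Dvals (hm : MemM n m) (hpos : 0 < vol1 n m) : BddAbove (Dvals n m) :=
  ⟨1, by rintro _ ⟨s, hs, rfl⟩; exact Dice_le_one hm hpos hs.memM⟩

lemma exists_memS_integral_mul_eq (hm : MemM n m) (θ : ℝ) :
    ∃ s, MemS n s ∧
      ∫ x, s x * (2 * m x - θ) ∂lam n = ∫ x, max (2 * m x - θ) 0 ∂lam n := by
  refine ⟨fun x => if θ < 2 * m x then 1 else 0,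
    ⟨Measurable.ite (measurableSet_lt measurable_const (hm.1.const_mul 2))
      measurable_const measurable_const, fun x => by by_cases h : θ < 2 * m x <;> simp [h]⟩, ?_⟩
  congr 1 with x
  exact mul_eq_max_zero_iff.2 ⟨fun h => if_neg (by linarith), fun h => if_pos (by linarith)⟩

lemma mul_vol1_le_integral_max_sub_Dice (hm : MemM n m) (hpos : 0 < vol1 n m) (hc : MemM n c) :
    Dice n m c * vol1 n m ≤ ∫ x, max (2 * m x - Dice n m c) 0 ∂lam n :=
  (Dice_eq_iff hm hpos hc _).1 rfl ▸
    integral_mul_le_integral_max_zero hc.1 hc.2 (hm.integrable_two_mul_sub _)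

theorem integral_max_sub_sSup_Dvals (hm : MemM n m) (hpos : 0 < vol1 n m) :
    ∫ x, max (2 * m x - sSup (Dvals n m)) 0 ∂lam n = sSup (Dvals n m) * vol1 n m := by
  obtain ⟨t, ht, hteq⟩ := exists_memS_integral_mul_eq hm (sSup (Dvals n m))
  refine le_antisymm ?_ ?_
  · rw [← hteq, ← Dice_le_iff hm hpos ht.memM]
    exact le_csSup (bddAbove_Dvals hm hpos) ⟨t, ht, rfl⟩
  · have hclosed : IsClosed {θ | θ * vol1 n m ≤ ∫ x, max (2 * m x - θ) 0 ∂lam n} :=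
      isClosed_le (continuous_id.mul continuous_const)
        (lipschitzWith_one_integral_max_sub_zero (hm.integrable.const_mul 2)).continuous
    refine hclosed.closure_subset_iff.2 ?_
      (csSup_mem_closure ⟨0, zero_mem_Dvals⟩ (bddAbove_Dvals hm hpos))
    rintro _ ⟨s, hs, rfl⟩
    exact mul_vol1_le_integral_max_sub_Dice hm hpos hs.memM

lemma Dice_le_sSup_Dvals (hm : MemM n m) (hpos : 0 < vol1 n m) (hc : MemM n c) :
    Dice n m c ≤ sSup (Dvals n m) := by
  rw [Dice_le_iff hm hpos hc, ← integral_max_sub_sSup_Dvals hm hpos]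
  exact integral_mul_le_integral_max_zero hc.1 hc.2 (hm.integrable_two_mul_sub _)

lemma Dice_eq_sSup_Dvals_iff (hm : MemM n m) (hpos : 0 < vol1 n m) (hc : MemM n c) :
    Dice n m c = sSup (Dvals n m) ↔
      ∀ᵐ x ∂lam n, (2 * m x - sSup (Dvals n m) < 0 → c x = 0) ∧
        (0 < 2 * m x - sSup (Dvals n m) → c x = 1) := by
  rw [Dice_eq_iff hm hpos hc, ← integral_max_sub_sSup_Dvals hm hpos]
  exact integral_mul_eq_integral_max_zero_iff hc.1 hc.2 (hm.integrable_two_mul_sub _)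

lemma sInf_SDvals (hm : MemM n m) (hpos : 0 < vol1 n m) :
    sInf (SDvals n m) = 1 - sSup (Dvals n m) := by
  refine IsLeast.csInf_eq ⟨?_, ?_⟩
  · obtain ⟨t, ht, hteq⟩ := exists_memS_integral_mul_eq hm (sSup (Dvals n m))
    refine ⟨t, ht.memM, ?_⟩
    rw [softDice_eq_one_sub_Dice, (Dice_eq_iff hm hpos ht.memM _).2
      (hteq.trans (integral_max_sub_sSup_Dvals hm hpos))]
  · rintro _ ⟨c, hc, rfl⟩
    rw [softDice_eq_one_sub_Dice]
    linarith [Dice_le_sSup_Dvals hm hpos hc]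

end Dice

theorem soft_dice_minimizer_characterization
    (n : ℕ) (m : (Fin n → ℝ) → ℝ) (hm : MemM n m) (hpos : 0 < vol1 n m)
    (Dstar : ℝ) (hD : Dstar = sSup (Dvals n m))
    (c : (Fin n → ℝ) → ℝ) (hc : MemM n c) :
    softDice n m c = sInf (SDvals n m) ↔
      (∀ᵐ ω ∂(lam n),
        (m ω < Dstar / 2 → c ω = 0) ∧ (Dstar / 2 < m ω → c ω = 1)) := by
  subst hD
  rw [sInf_SDvals hm hpos, softDice_eq_one_sub_Dice, sub_right_inj,
    Dice_eq_sSup_Dvals_iff hm hpos hc]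
  simp only [sub_neg, sub_pos, lt_div_iff₀' (zero_lt_two' ℝ), div_lt_iff₀' (zero_lt_two' ℝ)]
end
end

section
/- For every v ∈ (0,1] there exists a measurable m₀ : Ω → [0,1] with ‖m₀‖₁ = v such that some minimizer c of the soft-Dice loss SD_{m₀} over M has ‖c‖₁ = v² = ‖m₀‖₁². (The lower bound ‖m‖₁² on the volume of soft-Dice minimizers is sharp.) -/
open MeasureTheory Filter

noncomputable section

/-! Let `A` be a slab of measure `v²` and let `m₀` be `1` on `A` and `b = v / (1 + v)` off `A`, so
that `‖m₀‖₁ = v`. For every `c ∈ M` with `T = ‖c‖₁` we have `∫ c m₀ ≤ b T + (1 - b) v²`, and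
`(1 + v) (b T + (1 - b) v²) = v (T + v)`; hence the Dice ratio `2 ∫ c m₀ / (T + v)` never exceeds
`2 v / (1 + v)`. The indicator of `A` attains this value and has volume `v²`. -/

open Set

instance : IsProbabilityMeasure (volume.restrict (Icc (0 : ℝ) 1)) :=
  ⟨by simp⟩

lemma lam_eq_pi (n : ℕ) : lam n = Measure.pi fun _ : Fin n => volume.restrict (Icc (0 : ℝ) 1) := by
  rw [lam, cube, volume_pi, Measure.restrict_pi_pi]

instance inst_s4 (n : ℕ) : IsProbabilityMeasure (lam n) := by
  rw [lam_eq_pi]; infer_instance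

lemma measurePreserving_eval_lam {n : ℕ} (i : Fin n) :
    MeasurePreserving (Function.eval i) (lam n) (volume.restrict (Icc (0 : ℝ) 1)) := by
  rw [lam_eq_pi]; exact measurePreserving_eval _ i

lemma exists_measurableSet_lam_real_eq {n : ℕ} (hn : 0 < n) {r : ℝ} (hr : r ∈ Icc (0 : ℝ) 1) :
    ∃ A : Set (Fin n → ℝ), MeasurableSet A ∧ (lam n).real A = r := by
  let i : Fin n := ⟨0, hn⟩
  refine ⟨Function.eval i ⁻¹' Iic r, measurableSet_Iic.preimage (measurable_pi_apply i), ?_⟩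
  have hslab : Iic r ∩ Icc 0 1 = Icc 0 r := by
    rw [inter_comm, ← Ici_inter_Iic, inter_assoc, Iic_inter_Iic, min_eq_right hr.2, Ici_inter_Iic]
  rw [measureReal_def, (measurePreserving_eval_lam i).measure_preimage
    measurableSet_Iic.nullMeasurableSet, Measure.restrict_apply measurableSet_Iic, hslab,
    Real.volume_Icc, sub_zero, ENNReal.toReal_ofReal hr.1]

section LiftedIndicator

variable {α : Type*} {A : Set α} {b : ℝ}

def liftedIndicator (A : Set α) (b : ℝ) (x : α) : ℝ := b + (1 - b) * A.indicator 1 x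

lemma indicator_one_mul_liftedIndicator (A : Set α) (b : ℝ) (x : α) :
    A.indicator 1 x * liftedIndicator A b x = A.indicator 1 x := by
  by_cases hx : x ∈ A <;> simp [liftedIndicator, hx]

lemma liftedIndicator_mem_Icc (hb : b ∈ Icc (0 : ℝ) 1) (x : α) :
    liftedIndicator A b x ∈ Icc (0 : ℝ) 1 := by
  by_cases hx : x ∈ A <;> simp [liftedIndicator, hx, hb.1, hb.2]

variable [MeasurableSpace α] {μ : Measure α}

lemma measurable_liftedIndicator (hA : MeasurableSet A) : Measurable (liftedIndicator A b) :=
  measurable_const.add (measurable_const.indicator hA |>.const_mul _)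

lemma integral_liftedIndicator [IsProbabilityMeasure μ] (hA : MeasurableSet A) :
    ∫ x, liftedIndicator A b x ∂μ = b + (1 - b) * μ.real A := by
  have hint : Integrable (A.indicator (1 : α → ℝ)) μ := (integrable_const 1).indicator hA
  simp only [liftedIndicator]
  rw [integral_add (integrable_const b) (hint.const_mul _), integral_const, integral_const_mul,
    integral_indicator_one hA]
  simp

lemma integrable_of_mem_Icc [IsFiniteMeasure μ] {f : α → ℝ} (hf : Measurable f)
    (hf01 : ∀ x, f x ∈ Icc (0 : ℝ) 1) : Integrable f μ :=
  .of_bound hf.aestronglyMeasurable 1 <| .of_forall fun x => by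
    rw [Real.norm_eq_abs, abs_of_nonneg (hf01 x).1]; exact (hf01 x).2

lemma integral_mul_liftedIndicator_le [IsFiniteMeasure μ] (hA : MeasurableSet A) (hb : b ≤ 1)
    {f : α → ℝ} (hf : Measurable f) (hf01 : ∀ x, f x ∈ Icc (0 : ℝ) 1) :
    ∫ x, f x * liftedIndicator A b x ∂μ ≤ b * ∫ x, f x ∂μ + (1 - b) * μ.real A := by
  have hfA : Integrable (fun x => f x * A.indicator 1 x) μ :=
    integrable_of_mem_Icc (hf.mul (measurable_const.indicator hA)) fun x => by
      by_cases hx : x ∈ A <;> simp [hx, hf01 x]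
  have hfA_le : ∫ x, f x * A.indicator 1 x ∂μ ≤ μ.real A := by
    rw [← integral_indicator_one hA]
    refine integral_mono hfA ((integrable_const 1).indicator hA) fun x => ?_
    by_cases hx : x ∈ A <;> simp [hx, (hf01 x).2]
  have hsplit : ∫ x, f x * liftedIndicator A b x ∂μ
      = b * ∫ x, f x ∂μ + (1 - b) * ∫ x, f x * A.indicator 1 x ∂μ := by
    rw [← integral_const_mul, ← integral_const_mul, ← integral_add
      ((integrable_of_mem_Icc hf hf01).const_mul b) (hfA.const_mul _)]
    congr 1 with x
    simp only [liftedIndicator]; ring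
  rw [hsplit]
  gcongr

end LiftedIndicator

section SoftDice

variable {n : ℕ} {A : Set (Fin n → ℝ)} {v : ℝ}

lemma memM_indicator_one (hA : MeasurableSet A) : MemM n (A.indicator 1) :=
  ⟨measurable_const.indicator hA, fun x => by by_cases hx : x ∈ A <;> simp [hx]⟩

lemma memM_liftedIndicator (hA : MeasurableSet A) {b : ℝ} (hb : b ∈ Icc (0 : ℝ) 1) :
    MemM n (liftedIndicator A b) :=
  ⟨measurable_liftedIndicator hA, liftedIndicator_mem_Icc hb⟩

lemma vol1_indicator_one (hA : MeasurableSet A) : vol1 n (A.indicator 1) = (lam n).real A :=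
  integral_indicator_one hA

lemma vol1_liftedIndicator (hA : MeasurableSet A) (hAv : (lam n).real A = v ^ 2) (hv : 0 < v) :
    vol1 n (liftedIndicator A (v / (1 + v))) = v := by
  rw [vol1, integral_liftedIndicator hA, hAv]
  field_simp
  ring

lemma softDice_liftedIndicator_indicator_one (hA : MeasurableSet A)
    (hAv : (lam n).real A = v ^ 2) (hv : 0 < v) :
    softDice n (liftedIndicator A (v / (1 + v))) (A.indicator 1) = 1 - 2 * v / (1 + v) := by
  simp only [softDice, indicator_one_mul_liftedIndicator]
  rw [← vol1, vol1_indicator_one hA, vol1_liftedIndicator hA hAv hv, hAv]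
  field_simp
  ring

lemma le_softDice_liftedIndicator (hA : MeasurableSet A) (hAv : (lam n).real A = v ^ 2)
    (hv : 0 < v) {c : (Fin n → ℝ) → ℝ} (hc : MemM n c) :
    1 - 2 * v / (1 + v) ≤ softDice n (liftedIndicator A (v / (1 + v))) c := by
  have hb : v / (1 + v) ≤ 1 := div_le_one_of_le₀ (by linarith) (by positivity)
  have hI := integral_mul_liftedIndicator_le (μ := lam n) hA hb hc.1 hc.2
  have hT : 0 ≤ vol1 n c := integral_nonneg fun x => (hc.2 x).1
  rw [hAv] at hI
  rw [softDice, vol1_liftedIndicator hA hAv hv, sub_le_sub_iff_left,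
    div_le_div_iff₀ (by positivity) (by positivity)]
  have hI' : (∫ x, c x * liftedIndicator A (v / (1 + v)) x ∂lam n) * (1 + v)
      ≤ v * (vol1 n c + v) := by
    calc _ ≤ (v / (1 + v) * vol1 n c + (1 - v / (1 + v)) * v ^ 2) * (1 + v) := by
          gcongr; exact hI
      _ = v * (vol1 n c + v) := by field_simp; ring
  linarith

lemma isLeast_SDvals_liftedIndicator (hA : MeasurableSet A) (hAv : (lam n).real A = v ^ 2)
    (hv : 0 < v) :
    IsLeast (SDvals n (liftedIndicator A (v / (1 + v))))
      (softDice n (liftedIndicator A (v / (1 + v))) (A.indicator 1)) := by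
  refine ⟨⟨_, memM_indicator_one hA, rfl⟩, ?_⟩
  rintro _ ⟨c, hc, rfl⟩
  rw [softDice_liftedIndicator_indicator_one hA hAv hv]
  exact le_softDice_liftedIndicator hA hAv hv hc

end SoftDice

theorem soft_dice_volume_lower_bound_sharp
    (n : ℕ) (hn : 1 ≤ n) (v : ℝ) (hv : v ∈ Set.Ioc (0:ℝ) 1) :
    ∃ m₀ : (Fin n → ℝ) → ℝ, MemM n m₀ ∧ vol1 n m₀ = v ∧
      ∃ c : (Fin n → ℝ) → ℝ, MemM n c ∧
        softDice n m₀ c = sInf (SDvals n m₀) ∧ vol1 n c = v ^ 2 := by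
  obtain ⟨hv0, hv1⟩ := hv
  obtain ⟨A, hA, hAv⟩ :=
    exists_measurableSet_lam_real_eq hn ⟨sq_nonneg v, pow_le_one₀ hv0.le hv1⟩
  have hb : v / (1 + v) ∈ Icc (0 : ℝ) 1 :=
    ⟨by positivity, div_le_one_of_le₀ (by linarith) (by positivity)⟩
  refine ⟨liftedIndicator A (v / (1 + v)), memM_liftedIndicator hA hb,
    vol1_liftedIndicator hA hAv hv0, A.indicator 1, memM_indicator_one hA,
    (isLeast_SDvals_liftedIndicator hA hAv hv0).csInf_eq.symm, ?_⟩
  rw [vol1_indicator_one hA, hAv]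
end
end

section
/- Monotonicity lemma used for Dice threshold optimality: let m ∈ M, s ∈ S with D = D_m(s), and let A ⊆ Ω be measurable with λ(A) > 0, A disjoint from {s = 1}. If m(ω) > D/2 for all ω ∈ A, then D_m(s ∨ 1_A) > D_m(s); symmetrically, if B ⊆ {s = 1} with λ(B) > 0 and m(ω) < D/2 on B, then D_m(s − 1_B) > D_m(s). -/
open MeasureTheory Filter

noncomputable section

/-! Writing `D_m(s) = 2P/(V + W)`, adding a set `A` disjoint from the foreground turns the Dice
score into the mediant `(2P + 2∫_A m) / (V + W + λ(A))` of `D_m(s)` and `2∫_A m / λ(A)`, which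
lies strictly above `D_m(s)` exactly when the average of `m` on `A` exceeds `D_m(s)/2`.
Removing `B ⊆ {s = 1}` is the same computation read backwards: `D_m(s)` is the mediant of
`D_m(s - 1_B)` and `2∫_B m / λ(B)`, so it lies strictly below `D_m(s - 1_B)` when the latter
quotient is smaller than `D_m(s)`. -/

section Mediant

variable {α : Type*} [Field α] [LinearOrder α] [IsStrictOrderedRing α] {a b c d : α}

theorem div_lt_add_div_add_iff (hb : 0 < b) (hd : 0 < d) :
    a / b < (a + c) / (b + d) ↔ a / b < c / d := by
  rw [div_lt_div_iff₀ hb (add_pos hb hd), div_lt_div_iff₀ hb hd]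
  constructor <;> intro h <;> linarith

theorem add_div_add_lt_div_iff (hb : 0 < b) (hd : 0 < d) :
    (a + c) / (b + d) < a / b ↔ c / d < (a + c) / (b + d) := by
  rw [div_lt_div_iff₀ (add_pos hb hd) hb, div_lt_div_iff₀ hd (add_pos hb hd)]
  constructor <;> intro h <;> nlinarith

end Mediant

section SetIntegral

variable {X : Type*} [MeasurableSpace X] {μ : Measure X} {A : Set X} {f g : X → ℝ} {c : ℝ}

theorem setIntegral_lt_setIntegral_of_forall_lt (hA : MeasurableSet A) (hμA : μ A ≠ 0)
    (hf : IntegrableOn f A μ) (hg : IntegrableOn g A μ) (hlt : ∀ x ∈ A, f x < g x) :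
    ∫ x in A, f x ∂μ < ∫ x in A, g x ∂μ := by
  rw [← sub_pos, ← integral_sub hg hf, setIntegral_pos_iff_support_of_nonneg_ae
    ((ae_restrict_iff' hA).2 (ae_of_all _ fun x hx => (sub_pos.2 (hlt x hx)).le)) (hg.sub hf)]
  exact (pos_iff_ne_zero.2 hμA).trans_le
    (measure_mono fun x hx => ⟨(sub_pos.2 (hlt x hx)).ne', hx⟩)

theorem mul_measureReal_lt_setIntegral (hA : MeasurableSet A) (hμA : μ A ≠ 0) (hμA' : μ A ≠ ⊤)
    (hf : IntegrableOn f A μ) (hlt : ∀ x ∈ A, c < f x) :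
    c * μ.real A < ∫ x in A, f x ∂μ := by
  simpa [setIntegral_const, mul_comm] using
    setIntegral_lt_setIntegral_of_forall_lt hA hμA (integrableOn_const hμA') hf hlt

theorem setIntegral_lt_mul_measureReal (hA : MeasurableSet A) (hμA : μ A ≠ 0) (hμA' : μ A ≠ ⊤)
    (hf : IntegrableOn f A μ) (hlt : ∀ x ∈ A, f x < c) :
    ∫ x in A, f x ∂μ < c * μ.real A := by
  simpa [setIntegral_const, mul_comm] using
    setIntegral_lt_setIntegral_of_forall_lt hA hμA hf (integrableOn_const hμA') hlt

theorem integrable_indicator_one [IsFiniteMeasure μ] (hA : MeasurableSet A) :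
    Integrable (A.indicator (1 : X → ℝ)) μ :=
  (integrable_const (1 : ℝ)).indicator hA

end SetIntegral

instance isFiniteMeasure_lam (n : ℕ) : IsFiniteMeasure (lam n) := by
  constructor
  rw [lam, Measure.restrict_apply_univ, cube, Set.pi_univ_Icc, Real.volume_Icc_pi]
  simp

theorem MemM.abs_le_one {n : ℕ} {m : (Fin n → ℝ) → ℝ} (hm : MemM n m) (ω : Fin n → ℝ) :
    |m ω| ≤ 1 :=
  abs_le.2 ⟨by linarith [(hm.2 ω).1], (hm.2 ω).2⟩

theorem MemM.integrable_s17 {n : ℕ} {m : (Fin n → ℝ) → ℝ} (hm : MemM n m) : Integrable m (lam n) :=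
  (integrable_const (1 : ℝ)).mono' hm.1.aestronglyMeasurable (ae_of_all _ hm.abs_le_one)

theorem MemS.nonneg {n : ℕ} {s : (Fin n → ℝ) → ℝ} (hs : MemS n s) (ω : Fin n → ℝ) : 0 ≤ s ω := by
  rcases hs.2 ω with h | h <;> simp [h]

theorem MemS.integrable_s17 {n : ℕ} {s : (Fin n → ℝ) → ℝ} (hs : MemS n s) : Integrable s (lam n) :=
  (integrable_const (1 : ℝ)).mono' hs.1.aestronglyMeasurable
    (ae_of_all _ fun ω => by rcases hs.2 ω with h | h <;> simp [h])

theorem vol1_nonneg {n : ℕ} {f : (Fin n → ℝ) → ℝ} (hf : 0 ≤ f) : 0 ≤ vol1 n f :=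
  integral_nonneg hf

section Dice

variable {n : ℕ} {m s : (Fin n → ℝ) → ℝ} {A : Set (Fin n → ℝ)}

theorem dice_add_indicator (hm : MemM n m) (hs : Integrable s (lam n)) (hA : MeasurableSet A) :
    Dice n m (s + A.indicator 1) =
      (2 * ∫ ω, s ω * m ω ∂lam n + 2 * ∫ ω in A, m ω ∂lam n) /
        (vol1 n s + vol1 n m + (lam n).real A) := by
  have hsm : Integrable (fun ω => s ω * m ω) (lam n) :=
    hs.mul_bdd hm.1.aestronglyMeasurable (ae_of_all _ hm.abs_le_one)
  have hmul : (fun ω => (s + A.indicator 1 : (Fin n → ℝ) → ℝ) ω * m ω) =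
      fun ω => s ω * m ω + A.indicator m ω := by
    funext ω; by_cases h : ω ∈ A <;> simp [h, add_mul]
  have hvol : vol1 n (s + A.indicator 1) = vol1 n s + (lam n).real A := by
    rw [vol1, integral_add' hs (integrable_indicator_one hA), integral_indicator_one hA, vol1]
  rw [Dice, hmul, integral_add hsm (hm.integrable_s17.indicator hA), integral_indicator hA, hvol]
  ring

theorem dice_lt_dice_add_indicator (hm : MemM n m) (hs : Integrable s (lam n))
    (hd : 0 < vol1 n s + vol1 n m) (hA : MeasurableSet A) (hApos : 0 < lam n A)
    (hmA : ∀ ω ∈ A, Dice n m s / 2 < m ω) :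
    Dice n m s < Dice n m (s + A.indicator 1) := by
  have ha : 0 < (lam n).real A := ENNReal.toReal_pos hApos.ne' (measure_ne_top _ _)
  have hmean := mul_measureReal_lt_setIntegral hA hApos.ne' (measure_ne_top _ _)
    hm.integrable_s17.integrableOn hmA
  rw [dice_add_indicator hm hs hA]
  refine (div_lt_add_div_add_iff hd ha).2 ?_
  rw [lt_div_iff₀ ha]
  change Dice n m s * _ < _
  linarith

theorem dice_lt_dice_sub_indicator (hm : MemM n m) (hs : Integrable s (lam n))
    (hd : 0 < vol1 n (s - A.indicator 1) + vol1 n m) (hA : MeasurableSet A) (hApos : 0 < lam n A)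
    (hmA : ∀ ω ∈ A, m ω < Dice n m s / 2) :
    Dice n m s < Dice n m (s - A.indicator 1) := by
  have ha : 0 < (lam n).real A := ENNReal.toReal_pos hApos.ne' (measure_ne_top _ _)
  have hmean := setIntegral_lt_mul_measureReal hA hApos.ne' (measure_ne_top _ _)
    hm.integrable_s17.integrableOn hmA
  have hsplit := dice_add_indicator hm (hs.sub (integrable_indicator_one hA)) hA
  rw [sub_add_cancel] at hsplit
  rw [hsplit]
  refine (add_div_add_lt_div_iff hd ha).2 ?_
  rw [← hsplit, div_lt_iff₀ ha]
  linarith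

end Dice

theorem dice_monotonicity_lemma
    (n : ℕ) (m : (Fin n → ℝ) → ℝ) (hm : MemM n m) (hpos : 0 < vol1 n m)
    (s : (Fin n → ℝ) → ℝ) (hs : MemS n s) :
    (∀ A : Set (Fin n → ℝ), MeasurableSet A → 0 < lam n A →
      (∀ ω ∈ A, s ω = 0) → (∀ ω ∈ A, Dice n m s / 2 < m ω) →
      Dice n m s < Dice n m (fun ω => max (s ω) (A.indicator 1 ω))) ∧
    (∀ B : Set (Fin n → ℝ), MeasurableSet B → 0 < lam n B →
      (∀ ω ∈ B, s ω = 1) → (∀ ω ∈ B, m ω < Dice n m s / 2) →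
      Dice n m s < Dice n m (fun ω => s ω - B.indicator 1 ω)) := by
  refine ⟨fun A hA hApos hsA hmA => ?_, fun B hB hBpos hsB hmB => ?_⟩
  · have hmax : (fun ω => max (s ω) (A.indicator 1 ω)) = s + A.indicator 1 := by
      funext ω
      by_cases h : ω ∈ A
      · simp [h, hsA ω h]
      · simp [h, hs.nonneg ω]
    have hd : 0 < vol1 n s + vol1 n m := by
      linarith [vol1_nonneg hs.nonneg]
    rw [hmax]
    exact dice_lt_dice_add_indicator hm hs.integrable_s17 hd hA hApos hmA
  · have hrest : 0 ≤ s - B.indicator 1 := fun ω => by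
      by_cases h : ω ∈ B
      · simp [h, hsB ω h]
      · simp [h, hs.nonneg ω]
    have hd : 0 < vol1 n (s - B.indicator 1) + vol1 n m := by
      linarith [vol1_nonneg hrest]
    exact dice_lt_dice_sub_indicator hm hs.integrable_s17 hd hB hBpos hmB
end
end
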